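/- Let Λ_∘ > 0 be a Hermitian matrix satisfying the fixed point conditions, and X_⊥ a Hermitian matrix with G* X_⊥ G ≡ 0 on the unit circle and Λ_∘ + X_⊥ ≥ 0. Then Θ(Λ_∘ + X_⊥) = Λ_∘ + X_⊥, i.e., Λ_∘ + X_⊥ is also a fixed point of the map Θ(Λ) = ∫ Λ^{1/2} G (Ψ/(G*ΛG)) G* Λ^{1/2}. -/

import Mathlib

open Matrix MeasureTheory Real Filter
open scoped ComplexOrder

noncomputable section

abbrev Mat (n : ℕ) := Matrix (Fin n) (Fin n) ℂ
abbrev Vec (n : ℕ) := Matrix (Fin n) (Fin 1) ℂ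

/-- the point e^{jθ} on the unit circle -/
def circPt (θ : ℝ) : ℂ := Complex.exp (θ * Complex.I)

/-- G(e^{jθ}) = (e^{jθ} I - A)⁻¹ B -/
def Gm {n : ℕ} (A : Mat n) (B : Vec n) (θ : ℝ) : Vec n :=
  (circPt θ • (1 : Mat n) - A)⁻¹ * B

/-- the scalar G* Λ G at e^{jθ} -/
def quad {n : ℕ} (A : Mat n) (B : Vec n) (Λ : Mat n) (θ : ℝ) : ℂ :=
  ((Gm A B θ)ᴴ * Λ * Gm A B θ) 0 0

/-- normalized entrywise matrix integral over the unit circle -/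
def mInt {n : ℕ} (f : ℝ → Mat n) : Mat n :=
  Matrix.of fun i j => (1 / (2 * π) : ℝ) • ∫ θ in (0:ℝ)..(2 * π), f θ i j

/-- normalized scalar (complex) integral over the unit circle -/
def sInt (f : ℝ → ℂ) : ℂ := (1 / (2 * π) : ℝ) • ∫ θ in (0:ℝ)..(2 * π), f θ

/-- normalized scalar (real) integral over the unit circle -/
def sIntR (f : ℝ → ℝ) : ℝ := (1 / (2 * π)) * ∫ θ in (0:ℝ)..(2 * π), f θ

/-- all eigenvalues of A lie in the open unit disc -/
def IsStable {n : ℕ} (A : Mat n) : Prop := ∀ μ ∈ spectrum ℂ A, ‖μ‖ < 1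

/-- (A,B) is a reachable pair: the controllability matrix has full rank -/
def Reachable {n : ℕ} (A : Mat n) (B : Vec n) : Prop :=
  (Matrix.of fun (i : Fin n) (k : Fin n) => (A ^ (k : ℕ) * B) i 0).rank = n

/-- the old Mathlib `Matrix.PosSemidef.sqrt` (removed since), with its old definition -/
def psdSqrt {n : ℕ} {M : Mat n} (hM : M.PosSemidef) : Mat n :=
  hM.1.eigenvectorUnitary.1 * diagonal ((↑) ∘ (√·) ∘ hM.1.eigenvalues) *
  (star hM.1.eigenvectorUnitary : Mat n)

open scoped Classical in
/-- positive semidefinite square root (junk value 0 off the psd cone) -/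
def msqrt {n : ℕ} (M : Mat n) : Mat n :=
  if h : M.PosSemidef then psdSqrt h else 0

/-- the moment map ∫ G (Ψ/(G*ΛG)) G* -/
def moment {n : ℕ} (A : Mat n) (B : Vec n) (Ψ : ℝ → ℝ) (Λ : Mat n) : Mat n :=
  mInt (fun θ => ((Ψ θ : ℂ) / quad A B Λ θ) • (Gm A B θ * (Gm A B θ)ᴴ))

/-- the iteration map Θ(Λ) = ∫ Λ^{1/2} G (Ψ/(G*ΛG)) G* Λ^{1/2} -/
def Theta {n : ℕ} (A : Mat n) (B : Vec n) (Ψ : ℝ → ℝ) (Λ : Mat n) : Mat n :=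
  mInt (fun θ => ((Ψ θ : ℂ) / quad A B Λ θ) •
    (msqrt Λ * (Gm A B θ * (Gm A B θ)ᴴ) * msqrt Λ))

/-- the linearization M of Θ at Λ:
M(X) = X - Λ^{1/2} ∫ (GΨG*/(G*ΛG)) (G*XG/(G*ΛG)) Λ^{1/2} -/
def Mlin {n : ℕ} (A : Mat n) (B : Vec n) (Ψ : ℝ → ℝ) (Λ : Mat n) (X : Mat n) : Mat n :=
  X - msqrt Λ * mInt (fun θ =>
    (((Ψ θ : ℂ) * (((Gm A B θ)ᴴ * X * Gm A B θ) 0 0)) / (quad A B Λ θ) ^ 2) •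
      (Gm A B θ * (Gm A B θ)ᴴ)) * msqrt Λ

/-- the range of the operator Γ : Φ ↦ ∫ G Φ G* on continuous (2π-periodic) functions -/
def RangeGamma {n : ℕ} (A : Mat n) (B : Vec n) : Set (Mat n) :=
  {M | ∃ Φ : ℝ → ℝ, Continuous Φ ∧ (∀ θ, Φ (θ + 2 * π) = Φ θ) ∧
    M = mInt (fun θ => (Φ θ : ℂ) • (Gm A B θ * (Gm A B θ)ᴴ))}

/-
Since `G* X G ≡ 0`, adding `X` to `Λ` leaves the denominator `G* Λ G` unchanged, so the integrand
of `Θ(Λ + X)` is `S (Ψ / (G* Λ G)) G G* S` with `S = (Λ + X)^{1/2}`. The integral commutes with the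
constant factors `S`, giving `Θ(Λ + X) = S · (∫ G (Ψ / (G* Λ G)) G*) · S = S · I · S = Λ + X`.
-/

theorem msqrt_mul_self {n : ℕ} {M : Mat n} (hM : M.PosSemidef) : msqrt M * msqrt M = M := by
  set U : Mat n := (hM.1.eigenvectorUnitary : Mat n)
  have hUU : (star U : Mat n) * U = 1 := Unitary.coe_star_mul_self _
  have hD : diagonal ((↑) ∘ (√·) ∘ hM.1.eigenvalues) * diagonal ((↑) ∘ (√·) ∘ hM.1.eigenvalues)
      = diagonal (RCLike.ofReal ∘ hM.1.eigenvalues : Fin n → ℂ) := by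
    rw [diagonal_mul_diagonal]
    congr 1
    funext i
    simp [← Complex.ofReal_mul, Real.mul_self_sqrt (hM.eigenvalues_nonneg i)]
  rw [msqrt, dif_pos hM, psdSqrt]
  conv_rhs => rw [hM.1.spectral_theorem, Unitary.conjStarAlgAut_apply]
  simp only [mul_assoc]
  rw [← mul_assoc _ U, hUU, one_mul, ← mul_assoc _ _ (star U : Mat n), hD]

theorem mInt_mul_mul {n : ℕ} (S T : Mat n) {f : ℝ → Mat n}
    (hf : ∀ i j, IntervalIntegrable (fun θ => f θ i j) volume 0 (2 * π)) :
    mInt (fun θ => S * f θ * T) = S * mInt f * T := by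
  have hint : ∀ i j k l,
      IntervalIntegrable (fun θ => S i k * f θ k l * T l j) volume 0 (2 * π) :=
    fun i j k l => ((hf k l).const_mul _).mul_const _
  ext i j
  simp only [mInt, of_apply, mul_apply, Finset.sum_mul]
  have hrow : ∀ l, IntervalIntegrable (fun θ => ∑ k, S i k * f θ k l * T l j) volume 0 (2 * π) :=
    fun l => by simpa only [Finset.sum_fn] using IntervalIntegrable.sum _ fun k _ => hint i j k l
  rw [intervalIntegral.integral_finsetSum fun l _ => hrow l, Finset.smul_sum]
  refine Finset.sum_congr rfl fun l _ => ?_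
  rw [intervalIntegral.integral_finsetSum fun k _ => hint i j k l, Finset.smul_sum]
  refine Finset.sum_congr rfl fun k _ => ?_
  rw [intervalIntegral.integral_mul_const, intervalIntegral.integral_const_mul]
  simp only [Complex.real_smul]
  ring

section TransferFunction

variable {n : ℕ} {A : Mat n} (B : Vec n)

theorem isUnit_circPt_smul_one_sub (hA : IsStable A) (θ : ℝ) :
    IsUnit (circPt θ • (1 : Mat n) - A) := by
  have hθ : circPt θ ∉ spectrum ℂ A := fun h => by
    simpa [circPt, Complex.norm_exp] using hA _ h
  simpa [Algebra.algebraMap_eq_smul_one] using spectrum.notMem_iff.mp hθ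

theorem continuous_Gm (hA : IsStable A) : Continuous (Gm A B) := by
  have hpencil : Continuous fun θ => circPt θ • (1 : Mat n) - A :=
    ((Complex.continuous_exp.comp (by fun_prop)).smul continuous_const).sub continuous_const
  have hresolvent : Continuous fun θ => (circPt θ • (1 : Mat n) - A)⁻¹ := by
    refine continuous_iff_continuousAt.2 fun θ =>
      (continuousAt_matrix_inv _ ?_).comp hpencil.continuousAt
    obtain ⟨u, hu⟩ := (isUnit_iff_isUnit_det _).mp (isUnit_circPt_smul_one_sub hA θ)
    exact hu ▸ NormedRing.inverse_continuousAt u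
  exact hresolvent.matrix_mul continuous_const

theorem continuous_quad (hA : IsStable A) (Λ : Mat n) : Continuous (quad A B Λ) :=
  have hG := continuous_Gm B hA
  ((hG.matrix_conjTranspose.matrix_mul continuous_const).matrix_mul hG).matrix_elem 0 0

theorem quad_add_of_perp {Λ X : Mat n} {θ : ℝ} (hX : (Gm A B θ)ᴴ * X * Gm A B θ = 0) :
    quad A B (Λ + X) θ = quad A B Λ θ := by
  rw [quad, Matrix.mul_add, Matrix.add_mul, hX, add_zero, quad]

theorem moment_add_of_perp {Ψ : ℝ → ℝ} {Λ X : Mat n}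
    (hX : ∀ θ : ℝ, (Gm A B θ)ᴴ * X * Gm A B θ = 0) :
    moment A B Ψ (Λ + X) = moment A B Ψ Λ := by
  simp only [moment, quad_add_of_perp B (hX _)]

theorem Theta_eq_msqrt_mul_moment_mul (hA : IsStable A) {Ψ : ℝ → ℝ} (hΨ : Continuous Ψ)
    {Λ : Mat n} (hq : ∀ θ, quad A B Λ θ ≠ 0) :
    Theta A B Ψ Λ = msqrt Λ * moment A B Ψ Λ * msqrt Λ := by
  have hG := continuous_Gm B hA
  have hcont : Continuous fun θ => ((Ψ θ : ℂ) / quad A B Λ θ) • (Gm A B θ * (Gm A B θ)ᴴ) :=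
    ((Complex.continuous_ofReal.comp hΨ).div (continuous_quad B hA Λ) hq).smul
      (hG.matrix_mul hG.matrix_conjTranspose)
  rw [moment, ← mInt_mul_mul _ _ fun i j => (hcont.matrix_elem i j).intervalIntegrable _ _]
  simp only [Theta, Matrix.mul_smul, Matrix.smul_mul]

end TransferFunction

theorem stmt8_general {n : ℕ} (A : Mat n) (B : Vec n) (Ψ : ℝ → ℝ) (Λ X : Mat n)
    (hA : IsStable A)
    (hΨc : Continuous Ψ)
    (hq : ∀ θ, 0 < (quad A B Λ θ).re)
    (hmom : moment A B Ψ Λ = 1)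
    (hXperp : ∀ θ : ℝ, (Gm A B θ)ᴴ * X * Gm A B θ = 0)
    (hpsd : (Λ + X).PosSemidef) :
    Theta A B Ψ (Λ + X) = Λ + X := by
  have hq' : ∀ θ, quad A B (Λ + X) θ ≠ 0 := fun θ h => by
    rw [quad_add_of_perp B (hXperp θ)] at h
    exact (hq θ).ne' (by rw [h, Complex.zero_re])
  rw [Theta_eq_msqrt_mul_moment_mul B hA hΨc hq', moment_add_of_perp B hXperp, hmom, mul_one,
    msqrt_mul_self hpsd]

/-- if Λ∘ > 0 satisfies the fixed point conditions and X⊥ is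
Hermitian with G* X⊥ G ≡ 0 and Λ∘ + X⊥ ≥ 0, then Λ∘ + X⊥ is a fixed point of Θ. -/
theorem stmt8 {n : ℕ} (A : Mat n) (B : Vec n) (Ψ : ℝ → ℝ) (Λ X : Mat n)
    (hA : IsStable A) (hR : Reachable A B)
    (hΨc : Continuous Ψ) (hΨpos : ∀ θ, 0 < Ψ θ)
    (hΛ : Λ.PosDef)
    (hq : ∀ θ, 0 < (quad A B Λ θ).re)
    (hmom : moment A B Ψ Λ = 1)
    (hX : X.IsHermitian) (hXperp : ∀ θ : ℝ, (Gm A B θ)ᴴ * X * Gm A B θ = 0)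
    (hpsd : (Λ + X).PosSemidef) :
    Theta A B Ψ (Λ + X) = Λ + X :=
  stmt8_general A B Ψ Λ X hA hΨc hq hmom hXperp hpsd
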